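/- arXiv:1410.1266 — 2 statements merged into one kernel-verified Lean document; each statement's English description precedes it below -/
import Mathlib

section
/- Let (q, p) be feasible for Problem (P) with q_k = 0 for all k ∈ D^c, let 1 ≤ j ≤ |D| − 1, suppose the energy-causality constraint holds with equality at i = d_j, i.e. ∑_{k=1}^{d_j} ∑_{n∈N_k^I} p_{k,n} = ζ·∑_{k=1}^{d_j−1} h_k·q_k + B1, and suppose Δ := ζ·∑_{k=1}^{d_{j+1}−1} h_k·q_k + B1 − ∑_{k=1}^{d_{j+1}} ∑_{n∈N_k^I} p_{k,n} > 0. Define q̂ by q̂_{d_j} := q_{d_j} − Δ/(ζ·h_{d_j}), q̂_{d_{j+1}} := q_{d_{j+1}} + Δ/(ζ·h_{d_j}), and q̂_k := q_k otherwise; define p̂ by p̂_{k,n} := p_{k,n} + (h_{d_{j+1}} − h_{d_j})·Δ/(h_{d_j}·(K − d_{j+1})·N) for all k ∈ {d_{j+1}+1,…,K} and n ∈ N_k^I, and p̂_{k,n} := p_{k,n} otherwise. Then q̂ is nonnegative, (q̂, p̂) is feasible for Problem (P), and R(p̂) > R(p). -/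
noncomputable section

/-- The information sub-channel set `N_k^I = {0,…,N} \ {Π(k)}`. -/
def NI (N : ℕ) (Pi : ℕ → ℕ) (k : ℕ) : Finset ℕ := Finset.Icc 0 N \ {Pi k}

/-- Feasibility for Problem (P) with a single WET sub-channel `Π(k)` per slot. -/
def FeasibleP (K N : ℕ) (h : ℕ → ℕ → ℝ) (Q ζ B1 : ℝ) (Pi : ℕ → ℕ)
    (q : ℕ → ℝ) (p : ℕ → ℕ → ℝ) : Prop :=
  (∀ k ∈ Finset.Icc 1 K, 0 ≤ q k) ∧
  (∀ k ∈ Finset.Icc 1 K, Pi k = 0 → q k = 0) ∧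
  (∀ k ∈ Finset.Icc 1 K, ∀ n ∈ NI N Pi k, 0 ≤ p k n) ∧
  (∑ k ∈ Finset.Icc 1 K, q k ≤ (K : ℝ) * Q) ∧
  (∀ i ∈ Finset.Icc 1 K,
    ∑ k ∈ Finset.Icc 1 i, ∑ n ∈ NI N Pi k, p k n ≤
      ζ * ∑ k ∈ Finset.Icc 1 (i - 1), h k (Pi k) * q k + B1)

/-- Achievable rate for Problem (P). -/
def RateP (K N : ℕ) (g : ℕ → ℕ → ℝ) (Γσ : ℝ) (Pi : ℕ → ℕ) (p : ℕ → ℕ → ℝ) : ℝ :=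
  (1 / ((K : ℝ) * N)) * ∑ k ∈ Finset.Icc 1 K, ∑ n ∈ NI N Pi k,
    Real.logb 2 (1 + g k n * p k n / Γσ)

open Classical in
/-- The set `D` of causally dominating slots. -/
def Dset (K : ℕ) (h : ℕ → ℕ → ℝ) (Pi : ℕ → ℕ) : Finset ℕ :=
  (Finset.Icc 1 (K - 1)).filter
    (fun k => Pi k ≠ 0 ∧ ∀ j, 1 ≤ j → j < k → h j (Pi j) < h k (Pi k))

end

/-!
Let `s_i` be the energy slack at slot `i` (harvested before `i` plus `B1`, minus spent up to `i`);
causality says `s_i ≥ 0`, and `Δ = s_{d_{j+1}}`. Moving `δ = Δ / (ζ h_{d_j})` of WET power from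
`d_j` to `d_{j+1}` lowers the slack by exactly `Δ` on `(d_j, d_{j+1}]`. Since no slot strictly
between two consecutive dominating slots harvests, the slack cannot increase from `i` to
`d_{j+1}` there, so it stays nonnegative; tightness at `d_j` gives `ζ h_{d_j} q_{d_j} ≥ Δ`, i.e.
`q̂_{d_j} ≥ 0`. From `d_{j+1}` on, the larger gain `h_{d_{j+1}} > h_{d_j}` creates a surplus
`ζ δ (h_{d_{j+1}} - h_{d_j})`, which is exactly the extra power spread over the
`(K - d_{j+1}) N` information sub-channels of the later slots. The rate strictly increases because
slot `K` (with `Π(K) = 0`) has an information sub-channel of positive gain.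
-/

open Finset

lemma sum_Icc_one_eq_add {M : Type*} [AddCommMonoid M] (f : ℕ → M) {i m : ℕ} (him : i ≤ m) :
    ∑ k ∈ Icc 1 m, f k = ∑ k ∈ Icc 1 i, f k + ∑ k ∈ Ioc i m, f k :=
  (sum_Ioc_consecutive f (Nat.zero_le i) him).symm

lemma card_NI {N : ℕ} {Pi : ℕ → ℕ} {k : ℕ} (hk : Pi k ≤ N) : #(NI N Pi k) = N := by
  rw [NI, sdiff_singleton_eq_erase, card_erase_of_mem (by simp [hk]), Nat.card_Icc]
  omega

lemma one_mem_NI {N : ℕ} {Pi : ℕ → ℕ} {k : ℕ} (hN : 1 ≤ N) (hk : Pi k = 0) : 1 ∈ NI N Pi k := by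
  simp only [NI, mem_sdiff, mem_Icc, mem_singleton, hk]
  omega

lemma bounds_of_mem_Dset {K k : ℕ} {h : ℕ → ℕ → ℝ} {Pi : ℕ → ℕ} (hk : k ∈ Dset K h Pi) :
    1 ≤ k ∧ k < K ∧ Pi k ≠ 0 := by
  simp only [Dset, mem_filter, mem_Icc] at hk
  exact ⟨hk.1.1, by omega, hk.2.1⟩

lemma gain_lt_of_mem_Dset {K i k : ℕ} {h : ℕ → ℕ → ℝ} {Pi : ℕ → ℕ} (hk : k ∈ Dset K h Pi)
    (hi : 1 ≤ i) (hik : i < k) : h i (Pi i) < h k (Pi k) := by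
  simp only [Dset, mem_filter] at hk
  exact hk.2.2 i hi hik

lemma notMem_of_between_consecutive {S : Finset ℕ} {d : ℕ → ℕ} {M j k : ℕ}
    (hmono : ∀ i j, i < j → j ≤ M + 1 → d i < d j) (hsurj : ∀ k ∈ S, ∃ i, i ≤ M ∧ d i = k)
    (hj : j + 1 ≤ M) (hlo : d j < k) (hhi : k < d (j + 1)) : k ∉ S := by
  intro hk
  obtain ⟨i, hiM, rfl⟩ := hsurj k hk
  rcases lt_or_ge j i with hji | hij
  · rcases (show j + 1 ≤ i by omega).eq_or_lt with rfl | hji'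
    · omega
    · have := hmono (j + 1) i hji' (by omega)
      omega
  · rcases hij.eq_or_lt with rfl | hij'
    · omega
    · have := hmono i j hij' (by omega)
      omega

lemma Dset_consecutive {K M j : ℕ} {h : ℕ → ℕ → ℝ} {Pi : ℕ → ℕ} {d : ℕ → ℕ}
    (hdmono : ∀ i j, i < j → j ≤ M + 1 → d i < d j)
    (hdmem : ∀ i, 1 ≤ i → i ≤ M → d i ∈ Dset K h Pi)
    (hdsurj : ∀ k ∈ Dset K h Pi, ∃ i, 1 ≤ i ∧ i ≤ M ∧ d i = k) (hj1 : 1 ≤ j) (hjM : j + 1 ≤ M) :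
    1 ≤ d j ∧ d j < d (j + 1) ∧ d (j + 1) < K ∧ Pi (d j) ≠ 0 ∧ Pi (d (j + 1)) ≠ 0 ∧
      h (d j) (Pi (d j)) < h (d (j + 1)) (Pi (d (j + 1))) ∧
      ∀ k, d j < k → k < d (j + 1) → k ∉ Dset K h Pi := by
  have hbD := hdmem (j + 1) (by omega) hjM
  obtain ⟨ha1, -, hPia⟩ := bounds_of_mem_Dset (hdmem j hj1 (by omega))
  obtain ⟨-, hbK, hPib⟩ := bounds_of_mem_Dset hbD
  have hab := hdmono j (j + 1) (by omega) (by omega)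
  exact ⟨ha1, hab, hbK, hPia, hPib, gain_lt_of_mem_Dset hbD ha1 hab, fun k hlo hhi =>
    notMem_of_between_consecutive hdmono (fun k hk => (hdsurj k hk).imp fun _ hi => hi.2)
      hjM hlo hhi⟩

lemma nonneg_of_mem_NI {K N : ℕ} {Pi : ℕ → ℕ} {f : ℕ → ℕ → ℝ}
    (hpos : ∀ k ∈ Icc 1 K, ∀ n ∈ Icc 1 N, 0 < f k n) (hzero : ∀ k, f k 0 = 0) :
    ∀ k ∈ Icc 1 K, ∀ n ∈ NI N Pi k, 0 ≤ f k n := fun k hk n hn => by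
  rcases Nat.eq_zero_or_pos n with rfl | hn0
  · exact (hzero k).ge
  · exact (hpos k hk n (mem_Icc.2 ⟨hn0, by simp only [NI, mem_sdiff, mem_Icc] at hn; omega⟩)).le

noncomputable section

variable (N : ℕ) (h : ℕ → ℕ → ℝ) (ζ B1 : ℝ) (Pi : ℕ → ℕ)

def energySlack (q : ℕ → ℝ) (p : ℕ → ℕ → ℝ) (i : ℕ) : ℝ :=
  ζ * ∑ k ∈ Icc 1 (i - 1), h k (Pi k) * q k + B1 - ∑ k ∈ Icc 1 i, ∑ n ∈ NI N Pi k, p k n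

def transferMass (q : ℕ → ℝ) (a b : ℕ) (δ : ℝ) : ℕ → ℝ :=
  fun k => if k = a then q a - δ else if k = b then q b + δ else q k

def raiseAfter (p : ℕ → ℕ → ℝ) (b : ℕ) (E : ℝ) : ℕ → ℕ → ℝ :=
  fun k n => if b < k then p k n + E else p k n

end

section Slack

variable {N : ℕ} {h : ℕ → ℕ → ℝ} {ζ B1 : ℝ} {Pi : ℕ → ℕ}

lemma energySlack_le {q : ℕ → ℝ} {p : ℕ → ℕ → ℝ} {i m : ℕ} (hi : 1 ≤ i) (him : i ≤ m)
    (hp : ∀ k ∈ Ioc i m, ∀ n ∈ NI N Pi k, 0 ≤ p k n) :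
    energySlack N h ζ B1 Pi q p m ≤
      energySlack N h ζ B1 Pi q p i + ζ * ∑ k ∈ Ico i m, h k (Pi k) * q k := by
  have hgain : ∑ k ∈ Icc 1 (m - 1), h k (Pi k) * q k =
      ∑ k ∈ Icc 1 (i - 1), h k (Pi k) * q k + ∑ k ∈ Ico i m, h k (Pi k) * q k := by
    rw [sum_Icc_one_eq_add _ (by omega : i - 1 ≤ m - 1)]
    congr 2
    ext k
    simp only [mem_Ioc, mem_Ico]
    omega
  have hcons := sum_Icc_one_eq_add (fun k => ∑ n ∈ NI N Pi k, p k n) him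
  have hcons_nonneg : 0 ≤ ∑ k ∈ Ioc i m, ∑ n ∈ NI N Pi k, p k n :=
    sum_nonneg fun k hk => sum_nonneg (hp k hk)
  simp only [energySlack]
  rw [hgain, hcons, mul_add]
  linarith

lemma sum_mul_transferMass (q w : ℕ → ℝ) {a b : ℕ} (hab : a ≠ b) (δ : ℝ) (s : Finset ℕ) :
    ∑ k ∈ s, w k * transferMass q a b δ k =
      ∑ k ∈ s, w k * q k - (if a ∈ s then w a * δ else 0) + (if b ∈ s then w b * δ else 0) := by
  have hpoint : ∀ k, w k * transferMass q a b δ k =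
      w k * q k - (if a = k then w a * δ else 0) + (if b = k then w b * δ else 0) := by
    intro k
    unfold transferMass
    split_ifs <;> subst_vars <;> first | contradiction | ring
  simp only [hpoint, sum_add_distrib, sum_sub_distrib, sum_ite_eq]

lemma sum_sum_raiseAfter (p : ℕ → ℕ → ℝ) (b : ℕ) (E : ℝ) {i : ℕ}
    (hPi : ∀ k ∈ Icc 1 i, Pi k ≤ N) :
    ∑ k ∈ Icc 1 i, ∑ n ∈ NI N Pi k, raiseAfter p b E k n =
      ∑ k ∈ Icc 1 i, ∑ n ∈ NI N Pi k, p k n + ((i - b : ℕ) : ℝ) * (N * E) := by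
  have hinner : ∀ k ∈ Icc 1 i, ∑ n ∈ NI N Pi k, raiseAfter p b E k n =
      ∑ n ∈ NI N Pi k, p k n + if b < k then (N : ℝ) * E else 0 := by
    intro k hk
    unfold raiseAfter
    split_ifs
    · rw [sum_add_distrib, sum_const, card_NI (hPi k hk), nsmul_eq_mul]
    · rw [add_zero]
  rw [sum_congr rfl hinner, sum_add_distrib, ← sum_filter, sum_const, nsmul_eq_mul]
  congr 3
  rw [← Nat.card_Ioc b i]
  congr 1
  ext k
  simp only [mem_filter, mem_Icc, mem_Ioc]
  omega

lemma energySlack_transferMass_raiseAfter (q : ℕ → ℝ) (p : ℕ → ℕ → ℝ) {a b i : ℕ}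
    (ha : 1 ≤ a) (hb : 1 ≤ b) (hab : a ≠ b) (δ E : ℝ) (hPi : ∀ k ∈ Icc 1 i, Pi k ≤ N) :
    energySlack N h ζ B1 Pi (transferMass q a b δ) (raiseAfter p b E) i =
      energySlack N h ζ B1 Pi q p i
        - ζ * ((if a < i then h a (Pi a) * δ else 0) - (if b < i then h b (Pi b) * δ else 0))
        - ((i - b : ℕ) : ℝ) * (N * E) := by
  have hmem : ∀ c, 1 ≤ c → (c ∈ Icc 1 (i - 1) ↔ c < i) := fun c hc => by
    rw [mem_Icc]
    omega
  simp only [energySlack, sum_mul_transferMass q (fun k => h k (Pi k)) hab,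
    sum_sum_raiseAfter p b E hPi, if_congr (hmem a ha) rfl rfl, if_congr (hmem b hb) rfl rfl]
  ring

end Slack

section Feasibility

variable {K N : ℕ} {h : ℕ → ℕ → ℝ} {Q ζ B1 : ℝ} {Pi : ℕ → ℕ} {q : ℕ → ℝ} {p : ℕ → ℕ → ℝ}

lemma FeasibleP.energySlack_nonneg (hfeas : FeasibleP K N h Q ζ B1 Pi q p) {i : ℕ}
    (hi : i ∈ Icc 1 K) : 0 ≤ energySlack N h ζ B1 Pi q p i :=
  sub_nonneg.2 (hfeas.2.2.2.2 i hi)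

lemma FeasibleP.energySlack_le_harvest_of_tight (hfeas : FeasibleP K N h Q ζ B1 Pi q p)
    {a b : ℕ} (ha : 1 ≤ a) (hab : a < b) (hbK : b ≤ K) (hgap : ∀ k, a < k → k < b → q k = 0)
    (htight : energySlack N h ζ B1 Pi q p a = 0) :
    energySlack N h ζ B1 Pi q p b ≤ ζ * (h a (Pi a) * q a) := by
  have hle := energySlack_le (h := h) (ζ := ζ) (B1 := B1) (q := q) ha hab.le
    fun k hk => hfeas.2.2.1 k (by rw [mem_Ioc] at hk; rw [mem_Icc]; omega)
  have hharvest : ∑ k ∈ Ico a b, h k (Pi k) * q k = h a (Pi a) * q a :=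
    sum_eq_single_of_mem a (mem_Ico.2 ⟨le_rfl, hab⟩) fun k hk hka => by
      rw [mem_Ico] at hk
      rw [hgap k (by omega) hk.2, mul_zero]
  rwa [hharvest, htight, zero_add] at hle

lemma FeasibleP.energySlack_transferMass_raiseAfter_nonneg
    (hfeas : FeasibleP K N h Q ζ B1 Pi q p) (hPi : ∀ k ∈ Icc 1 K, Pi k ≤ N)
    {a b : ℕ} {δ E : ℝ} (ha : 1 ≤ a) (hab : a < b) (hbK : b ≤ K)
    (hgap : ∀ k, a < k → k < b → q k = 0)
    (hslack : ζ * (h a (Pi a) * δ) ≤ energySlack N h ζ B1 Pi q p b) (hE : 0 ≤ E)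
    (hcost : ((K : ℝ) - b) * (N * E) ≤ ζ * (h b (Pi b) * δ - h a (Pi a) * δ)) :
    ∀ i ∈ Icc 1 K, 0 ≤ energySlack N h ζ B1 Pi (transferMass q a b δ) (raiseAfter p b E) i := by
  intro i hi
  obtain ⟨hi1, hiK⟩ := mem_Icc.1 hi
  rw [energySlack_transferMass_raiseAfter q p ha (by omega) hab.ne δ E
    fun k hk => hPi k (Icc_subset_Icc_right hiK hk)]
  have hslack_i := hfeas.energySlack_nonneg hi
  rcases le_or_gt i a with hia | hai
  · rw [if_neg (by omega), if_neg (by omega), Nat.sub_eq_zero_of_le (by omega)]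
    simpa using hslack_i
  rcases le_or_gt i b with hib | hbi
  · have hle := energySlack_le (h := h) (ζ := ζ) (B1 := B1) (q := q) hi1 hib
      fun k hk => hfeas.2.2.1 k (by rw [mem_Ioc] at hk; rw [mem_Icc]; omega)
    rw [sum_eq_zero fun k hk => by rw [mem_Ico] at hk; rw [hgap k (by omega) hk.2, mul_zero],
      mul_zero, add_zero] at hle
    rw [if_pos hai, if_neg (by omega), Nat.sub_eq_zero_of_le hib, Nat.cast_zero, zero_mul,
      sub_zero, sub_zero]
    linarith
  · have hdelay : ((i - b : ℕ) : ℝ) * (N * E) ≤ ((K : ℝ) - b) * (N * E) := by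
      gcongr
      rw [Nat.cast_sub hbi.le]
      gcongr
    rw [if_pos (by omega), if_pos hbi]
    linarith

lemma FeasibleP.transferMass_raiseAfter (hfeas : FeasibleP K N h Q ζ B1 Pi q p)
    (hPi : ∀ k ∈ Icc 1 K, Pi k ≤ N) {a b : ℕ} {δ E : ℝ} (ha : 1 ≤ a) (hab : a < b) (hbK : b ≤ K)
    (hPia : Pi a ≠ 0) (hPib : Pi b ≠ 0) (hgap : ∀ k, a < k → k < b → q k = 0)
    (hδ : 0 ≤ δ) (hδa : δ ≤ q a)
    (hslack : ζ * (h a (Pi a) * δ) ≤ energySlack N h ζ B1 Pi q p b) (hE : 0 ≤ E)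
    (hcost : ((K : ℝ) - b) * (N * E) ≤ ζ * (h b (Pi b) * δ - h a (Pi a) * δ)) :
    FeasibleP K N h Q ζ B1 Pi (transferMass q a b δ) (raiseAfter p b E) := by
  have hamem : a ∈ Icc 1 K := mem_Icc.2 ⟨ha, by omega⟩
  have hbmem : b ∈ Icc 1 K := mem_Icc.2 ⟨by omega, hbK⟩
  have hcaus := hfeas.energySlack_transferMass_raiseAfter_nonneg hPi ha hab hbK hgap hslack hE hcost
  obtain ⟨hq, hq0, hp, hsum, -⟩ := hfeas
  refine ⟨fun k hk => ?_, fun k hk hk0 => ?_, fun k hk n hn => ?_, ?_,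
    fun i hi => sub_nonneg.1 (hcaus i hi)⟩
  · unfold transferMass
    split_ifs
    · linarith
    · linarith [hq b hbmem]
    · exact hq k hk
  · unfold transferMass
    rw [if_neg (by rintro rfl; exact hPia hk0), if_neg (by rintro rfl; exact hPib hk0)]
    exact hq0 k hk hk0
  · unfold raiseAfter
    split_ifs
    · linarith [hp k hk n hn]
    · exact hp k hk n hn
  · have hmass := sum_mul_transferMass q (fun _ => 1) hab.ne δ (Icc 1 K)
    simp only [one_mul, if_pos hamem, if_pos hbmem, sub_add_cancel] at hmass
    rwa [hmass]

end Feasibility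

lemma rateP_lt_rateP {K N : ℕ} {g : ℕ → ℕ → ℝ} {Γσ : ℝ} {Pi : ℕ → ℕ} {p p' : ℕ → ℕ → ℝ}
    (hN : 0 < N) (hΓσ : 0 < Γσ)
    (hg : ∀ k ∈ Icc 1 K, ∀ n ∈ NI N Pi k, 0 ≤ g k n)
    (hp : ∀ k ∈ Icc 1 K, ∀ n ∈ NI N Pi k, 0 ≤ p k n)
    (hle : ∀ k ∈ Icc 1 K, ∀ n ∈ NI N Pi k, p k n ≤ p' k n)
    (hlt : ∃ k ∈ Icc 1 K, ∃ n ∈ NI N Pi k, 0 < g k n ∧ p k n < p' k n) :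
    RateP K N g Γσ Pi p < RateP K N g Γσ Pi p' := by
  obtain ⟨k₀, hk₀, n₀, hn₀, hg₀, hlt₀⟩ := hlt
  have hK : 0 < K := by
    have := mem_Icc.1 hk₀
    omega
  have hterm : ∀ k ∈ Icc 1 K, ∀ n ∈ NI N Pi k,
      Real.logb 2 (1 + g k n * p k n / Γσ) ≤ Real.logb 2 (1 + g k n * p' k n / Γσ) := by
    intro k hk n hn
    have := hg k hk n hn
    have := hp k hk n hn
    gcongr
    · norm_num
    · exact hle k hk n hn
  unfold RateP
  have := hp k₀ hk₀ n₀ hn₀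
  gcongr ?_ * ?_
  refine sum_lt_sum (fun k hk => sum_le_sum (hterm k hk))
    ⟨k₀, hk₀, sum_lt_sum (hterm k₀ hk₀) ⟨n₀, hn₀, ?_⟩⟩
  gcongr
  norm_num

lemma rateP_lt_rateP_raiseAfter {K N : ℕ} {g : ℕ → ℕ → ℝ} {Γσ : ℝ} {Pi : ℕ → ℕ}
    {p : ℕ → ℕ → ℝ} {b : ℕ} {E : ℝ} (hN : 0 < N) (hΓσ : 0 < Γσ)
    (hg : ∀ k ∈ Icc 1 K, ∀ n ∈ NI N Pi k, 0 ≤ g k n)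
    (hp : ∀ k ∈ Icc 1 K, ∀ n ∈ NI N Pi k, 0 ≤ p k n) (hbK : b < K) (hE : 0 < E)
    (hgK : ∃ n ∈ NI N Pi K, 0 < g K n) :
    RateP K N g Γσ Pi p < RateP K N g Γσ Pi (raiseAfter p b E) := by
  obtain ⟨n, hn, hgn⟩ := hgK
  refine rateP_lt_rateP hN hΓσ hg hp (fun k _ n _ => ?_)
    ⟨K, mem_Icc.2 ⟨by omega, le_rfl⟩, n, hn, hgn, ?_⟩ <;>
  · unfold raiseAfter
    split_ifs <;> linarith

theorem stmt5_general
    (K N : ℕ) (hN : 2 ≤ N)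
    (h g : ℕ → ℕ → ℝ)
    (hpos : ∀ k ∈ Finset.Icc 1 K, ∀ n ∈ Finset.Icc 1 N, 0 < h k n ∧ 0 < g k n)
    (hzero : ∀ k, h k 0 = 0 ∧ g k 0 = 0)
    (Q ζ B1 Γσ : ℝ) (hζ : 0 < ζ) (hΓσ : 0 < Γσ)
    (Pi : ℕ → ℕ) (hPiK : Pi K = 0) (hPiR : ∀ k ∈ Finset.Icc 1 K, Pi k ≤ N)
    (M : ℕ)
    (d : ℕ → ℕ)
    (hdmono : ∀ i j, i < j → j ≤ M + 1 → d i < d j)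
    (hdmem : ∀ i, 1 ≤ i → i ≤ M → d i ∈ Dset K h Pi)
    (hdsurj : ∀ k ∈ Dset K h Pi, ∃ i, 1 ≤ i ∧ i ≤ M ∧ d i = k)
    (q : ℕ → ℝ) (p : ℕ → ℕ → ℝ)
    (hfeas : FeasibleP K N h Q ζ B1 Pi q p)
    (hqDc : ∀ k ∈ Finset.Icc 1 K, k ∉ Dset K h Pi → q k = 0)
    (j : ℕ) (hj1 : 1 ≤ j) (hjM : j + 1 ≤ M)
    (heq : ∑ k ∈ Finset.Icc 1 (d j), ∑ n ∈ NI N Pi k, p k n =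
      ζ * ∑ k ∈ Finset.Icc 1 (d j - 1), h k (Pi k) * q k + B1)
    (Δ : ℝ)
    (hΔ : Δ = ζ * ∑ k ∈ Finset.Icc 1 (d (j + 1) - 1), h k (Pi k) * q k + B1 -
      ∑ k ∈ Finset.Icc 1 (d (j + 1)), ∑ n ∈ NI N Pi k, p k n)
    (hΔpos : 0 < Δ) :
    (∀ k ∈ Finset.Icc 1 K, 0 ≤
      (if k = d j then q (d j) - Δ / (ζ * h (d j) (Pi (d j)))
        else if k = d (j + 1) then q (d (j + 1)) + Δ / (ζ * h (d j) (Pi (d j)))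
        else q k))
    ∧ FeasibleP K N h Q ζ B1 Pi
      (fun k => if k = d j then q (d j) - Δ / (ζ * h (d j) (Pi (d j)))
        else if k = d (j + 1) then q (d (j + 1)) + Δ / (ζ * h (d j) (Pi (d j)))
        else q k)
      (fun k n => if d (j + 1) < k then
          p k n + (h (d (j + 1)) (Pi (d (j + 1))) - h (d j) (Pi (d j))) * Δ /
            (h (d j) (Pi (d j)) * ((K : ℝ) - (d (j + 1) : ℝ)) * (N : ℝ))
        else p k n)
    ∧ RateP K N g Γσ Pi p <
      RateP K N g Γσ Pi
        (fun k n => if d (j + 1) < k then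
            p k n + (h (d (j + 1)) (Pi (d (j + 1))) - h (d j) (Pi (d j))) * Δ /
              (h (d j) (Pi (d j)) * ((K : ℝ) - (d (j + 1) : ℝ)) * (N : ℝ))
          else p k n) := by
  set a := d j
  set b := d (j + 1)
  obtain ⟨ha1, hab, hbK, hPia, hPib, hhab, hbetween⟩ :=
    Dset_consecutive hdmono hdmem hdsurj hj1 hjM
  have hgap : ∀ k, a < k → k < b → q k = 0 := fun k hak hkb =>
    hqDc k (mem_Icc.2 ⟨by omega, by omega⟩) (hbetween k hak hkb)
  have hamem : a ∈ Icc 1 K := mem_Icc.2 ⟨ha1, by omega⟩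
  have hha : 0 < h a (Pi a) :=
    (hpos a hamem (Pi a) (mem_Icc.2 ⟨Nat.pos_of_ne_zero hPia, hPiR a hamem⟩)).1
  have hKb : (0 : ℝ) < K - b := sub_pos.2 (by exact_mod_cast hbK)
  set δ := Δ / (ζ * h a (Pi a))
  set E := (h b (Pi b) - h a (Pi a)) * Δ / (h a (Pi a) * ((K : ℝ) - b) * N)
  have hE : 0 < E := div_pos (mul_pos (sub_pos.2 hhab) hΔpos) (by positivity)
  have hslack : energySlack N h ζ B1 Pi q p b = ζ * (h a (Pi a) * δ) := by
    rw [show ζ * (h a (Pi a) * δ) = Δ by simp only [δ]; field_simp]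
    exact hΔ.symm
  have hcost : ((K : ℝ) - b) * (N * E) = ζ * (h b (Pi b) * δ - h a (Pi a) * δ) := by
    have : (N : ℝ) ≠ 0 := by positivity
    simp only [δ, E]
    field_simp
  have hδa : δ ≤ q a := by
    have := hfeas.energySlack_le_harvest_of_tight ha1 hab hbK.le hgap (sub_eq_zero.2 heq.symm)
    rw [hslack, ← mul_assoc, ← mul_assoc] at this
    exact le_of_mul_le_mul_left this (mul_pos hζ hha)
  have hfeas' := hfeas.transferMass_raiseAfter (E := E) hPiR ha1 hab hbK.le hPia hPib hgap
    (by positivity) hδa hslack.ge hE.le hcost.le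
  have hgK : 0 < g K 1 := (hpos K (mem_Icc.2 ⟨by omega, le_rfl⟩) 1 (mem_Icc.2 ⟨le_rfl, by omega⟩)).2
  exact ⟨hfeas'.1, hfeas', rateP_lt_rateP_raiseAfter (by omega) hΓσ
    (nonneg_of_mem_NI (fun k hk n hn => (hpos k hk n hn).2) fun k => (hzero k).2) hfeas.2.2.1
    hbK hE ⟨1, one_mem_NI (by omega) hPiK, hgK⟩⟩

theorem stmt5
    (K N : ℕ) (hK : 2 ≤ K) (hN : 2 ≤ N)
    (h g : ℕ → ℕ → ℝ)
    (hpos : ∀ k ∈ Finset.Icc 1 K, ∀ n ∈ Finset.Icc 1 N, 0 < h k n ∧ 0 < g k n)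
    (hzero : ∀ k, h k 0 = 0 ∧ g k 0 = 0)
    (Q ζ B1 Γσ : ℝ) (hQ : 0 < Q) (hζ : 0 < ζ) (hB1 : 0 ≤ B1) (hΓσ : 0 < Γσ)
    (Pi : ℕ → ℕ) (hPiK : Pi K = 0) (hPiR : ∀ k ∈ Finset.Icc 1 K, Pi k ≤ N)
    (M : ℕ) (hM : M = (Dset K h Pi).card)
    (d : ℕ → ℕ) (hd0 : d 0 = 0) (hdK : d (M + 1) = K)
    (hdmono : ∀ i j, i < j → j ≤ M + 1 → d i < d j)
    (hdmem : ∀ i, 1 ≤ i → i ≤ M → d i ∈ Dset K h Pi)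
    (hdsurj : ∀ k ∈ Dset K h Pi, ∃ i, 1 ≤ i ∧ i ≤ M ∧ d i = k)
    (q : ℕ → ℝ) (p : ℕ → ℕ → ℝ)
    (hfeas : FeasibleP K N h Q ζ B1 Pi q p)
    (hqDc : ∀ k ∈ Finset.Icc 1 K, k ∉ Dset K h Pi → q k = 0)
    (j : ℕ) (hj1 : 1 ≤ j) (hjM : j + 1 ≤ M)
    (heq : ∑ k ∈ Finset.Icc 1 (d j), ∑ n ∈ NI N Pi k, p k n =
      ζ * ∑ k ∈ Finset.Icc 1 (d j - 1), h k (Pi k) * q k + B1)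
    (Δ : ℝ)
    (hΔ : Δ = ζ * ∑ k ∈ Finset.Icc 1 (d (j + 1) - 1), h k (Pi k) * q k + B1 -
      ∑ k ∈ Finset.Icc 1 (d (j + 1)), ∑ n ∈ NI N Pi k, p k n)
    (hΔpos : 0 < Δ) :
    (∀ k ∈ Finset.Icc 1 K, 0 ≤
      (if k = d j then q (d j) - Δ / (ζ * h (d j) (Pi (d j)))
        else if k = d (j + 1) then q (d (j + 1)) + Δ / (ζ * h (d j) (Pi (d j)))
        else q k))
    ∧ FeasibleP K N h Q ζ B1 Pi
      (fun k => if k = d j then q (d j) - Δ / (ζ * h (d j) (Pi (d j)))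
        else if k = d (j + 1) then q (d (j + 1)) + Δ / (ζ * h (d j) (Pi (d j)))
        else q k)
      (fun k n => if d (j + 1) < k then
          p k n + (h (d (j + 1)) (Pi (d (j + 1))) - h (d j) (Pi (d j))) * Δ /
            (h (d j) (Pi (d j)) * ((K : ℝ) - (d (j + 1) : ℝ)) * (N : ℝ))
        else p k n)
    ∧ RateP K N g Γσ Pi p <
      RateP K N g Γσ Pi
        (fun k n => if d (j + 1) < k then
            p k n + (h (d (j + 1)) (Pi (d (j + 1))) - h (d j) (Pi (d j))) * Δ /
              (h (d j) (Pi (d j)) * ((K : ℝ) - (d (j + 1) : ℝ)) * (N : ℝ))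
          else p k n) :=
  stmt5_general K N hN h g hpos hzero Q ζ B1 Γσ hζ hΓσ Pi hPiK hPiR M d hdmono hdmem hdsurj q p
    hfeas hqDc j hj1 hjM heq Δ hΔ hΔpos
end

section
/- Assume B1 = 0, D ≠ ∅, and that the values h_k over slots k with Π(k) ≠ 0 are pairwise distinct. Define effective gains g'_{k,n} := h_{d_i}·g_{k,n} for k ∈ D_{i+1}, i ∈ {1,…,|D|}, n ∈ N_k^I. Then the optimal value of Problem (P) equals the optimal value of the water-filling problem: maximize (1/(K·N))·∑_{k=d_1+1}^{K} ∑_{n∈N_k^I} log₂(1 + g'_{k,n}·p'_{k,n}/(Γσ²)) over nonnegative arrays p' = (p'_{k,n}), k ∈ {d_1+1,…,K}, n ∈ N_k^I, subject to ∑_{k=d_1+1}^{K} ∑_{n∈N_k^I} p'_{k,n} = ζ·K·Q. -/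
/-!
Before the first dominating slot `d₁` nothing can be harvested, hence nothing is transmitted.
For a later slot `k`, the gain `domGain k` of the last dominating slot before `k` is the largest
gain seen so far, and it is nondecreasing in `k`. Weighting the causality constraints with the
antitone weights `1 / domGain` (Abel summation) shows that the rescaled powers `p / domGain` fit
in the budget `ζ ∑ q ≤ ζ K Q`, so every feasible point of (P) is beaten by a water-filling point.
Conversely, a water-filling allocation is realised in (P) by harvesting, in each dominating slot
`d_i`, exactly the energy spent during `D_{i+1}`.
-/

open Finset

theorem sum_mul_le_sum_mul_of_partialSums_le {E c w : ℕ → ℝ} {a n : ℕ}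
    (hw : AntitoneOn w (Set.Ioc a n)) (hwn : 0 ≤ w n)
    (hE : ∀ i ∈ Ioc a n, ∑ k ∈ Ioc a i, E k ≤ ∑ k ∈ Ico a i, c k) :
    ∑ k ∈ Ioc a n, w k * E k ≤ ∑ k ∈ Ico a n, w (k + 1) * c k := by
  rcases le_or_gt n a with hna | han
  · simp [Ioc_eq_empty_of_le hna, Ico_eq_empty_of_le hna]
  -- Abel summation: the weighted slack `w m * (∑ c - ∑ E)` up to `m` is carried along.
  have key : ∀ m, a ≤ m → m ≤ n → ∑ k ∈ Ioc a m, w k * E k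
      + w m * (∑ k ∈ Ico a m, c k - ∑ k ∈ Ioc a m, E k) ≤ ∑ k ∈ Ico a m, w (k + 1) * c k := by
    intro m ham
    induction m, ham using Nat.le_induction with
    | base => simp
    | succ m ham ih =>
      intro hmn
      have hanti : w (m + 1) * (∑ k ∈ Ico a m, c k - ∑ k ∈ Ioc a m, E k)
          ≤ w m * (∑ k ∈ Ico a m, c k - ∑ k ∈ Ioc a m, E k) := by
        rcases ham.eq_or_lt with rfl | ham'
        · simp
        · exact mul_le_mul_of_nonneg_right (hw ⟨ham', by omega⟩ ⟨by omega, hmn⟩ (by omega))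
            (sub_nonneg.2 (hE m (mem_Ioc.2 ⟨ham', by omega⟩)))
      rw [sum_Ioc_succ_top ham, sum_Ioc_succ_top ham, sum_Ico_succ_top ham,
        sum_Ico_succ_top ham]
      linarith [ih (by omega)]
  nlinarith [key n han.le le_rfl, sub_nonneg.2 (hE n (mem_Ioc.2 ⟨han, le_rfl⟩))]

theorem exists_le_and_sum_sum_eq {ι κ : Type*} [DecidableEq ι] [DecidableEq κ]
    {s : Finset ι} {t : ι → Finset κ} {i₀ : ι} {j₀ : κ} (hi₀ : i₀ ∈ s) (hj₀ : j₀ ∈ t i₀)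
    {f : ι → κ → ℝ} {E : ℝ} (hf : ∑ i ∈ s, ∑ j ∈ t i, f i j ≤ E) :
    ∃ f' : ι → κ → ℝ, (∀ i j, f i j ≤ f' i j) ∧ ∑ i ∈ s, ∑ j ∈ t i, f' i j = E := by
  set S := ∑ i ∈ s, ∑ j ∈ t i, f i j
  refine ⟨fun i j => f i j + if i = i₀ ∧ j = j₀ then E - S else 0, fun i j => ?_, ?_⟩
  · dsimp only
    split_ifs <;> linarith
  · simp [sum_add_distrib, ite_and, hi₀, hj₀, S]

section Dominating

variable {K : ℕ} {h : ℕ → ℕ → ℝ} {Pi : ℕ → ℕ}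

theorem mem_Dset {k : ℕ} : k ∈ Dset K h Pi ↔
    k ∈ Icc 1 (K - 1) ∧ Pi k ≠ 0 ∧ ∀ j, 1 ≤ j → j < k → h j (Pi j) < h k (Pi k) := by
  simp [Dset]

theorem Dset.exists_le_gain_le (hh0 : ∀ k, h k 0 = 0) {j : ℕ} (hj : j ∈ Icc 1 (K - 1))
    (hpos : 0 < h j (Pi j)) : ∃ L ∈ Dset K h Pi, L ≤ j ∧ h j (Pi j) ≤ h L (Pi L) := by
  induction j using Nat.strong_induction_on with
  | _ j ih =>
    by_cases hjD : j ∈ Dset K h Pi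
    · exact ⟨j, hjD, le_rfl, le_rfl⟩
    have hPi : Pi j ≠ 0 := fun h0 => by simp [h0, hh0] at hpos
    obtain ⟨j', hj'1, hj'j, hle⟩ : ∃ j', 1 ≤ j' ∧ j' < j ∧ h j (Pi j) ≤ h j' (Pi j') := by
      simpa [mem_Dset, hj, hPi] using hjD
    obtain ⟨L, hL, hLj', hj'L⟩ :=
      ih j' hj'j (mem_Icc.2 ⟨hj'1, by grind⟩) (hpos.trans_le hle)
    exact ⟨L, hL, by omega, hle.trans hj'L⟩

variable (K h Pi) in
noncomputable def lastDom (k : ℕ) : ℕ := Nat.findGreatest (· ∈ Dset K h Pi) (k - 1)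

variable (K h Pi) in
/-- For `k ∈ D_{i+1}` this is `h_{d_i}`, the factor in the effective gains `g'_{k,n}`. -/
noncomputable def domGain (k : ℕ) : ℝ := h (lastDom K h Pi k) (Pi (lastDom K h Pi k))

theorem le_lastDom {L k : ℕ} (hL : L ∈ Dset K h Pi) (hLk : L < k) : L ≤ lastDom K h Pi k :=
  Nat.le_findGreatest (by omega) hL

theorem lastDom_lt {k : ℕ} (hk : 1 ≤ k) : lastDom K h Pi k < k :=
  (Nat.findGreatest_le _).trans_lt (by omega)

theorem lastDom_mem {d₁ k : ℕ} (hd₁ : d₁ ∈ Dset K h Pi) (hk : d₁ < k) :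
    lastDom K h Pi k ∈ Dset K h Pi :=
  Nat.findGreatest_spec (P := (· ∈ Dset K h Pi)) (by omega) hd₁

theorem lastDom_eq {L k : ℕ} (hL : L ∈ Dset K h Pi) (hLk : L < k)
    (hmax : ∀ j ∈ Dset K h Pi, j < k → j ≤ L) : lastDom K h Pi k = L :=
  le_antisymm (hmax _ (lastDom_mem hL hLk) (lastDom_lt (by omega))) (le_lastDom hL hLk)

variable (hgain : ∀ k ∈ Icc 1 K, Pi k ≠ 0 → 0 < h k (Pi k))
include hgain

theorem gain_pos_of_mem_Dset {L : ℕ} (hL : L ∈ Dset K h Pi) : 0 < h L (Pi L) := by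
  obtain ⟨hL, hPi, -⟩ := mem_Dset.1 hL
  exact hgain L (mem_Icc.2 ⟨(mem_Icc.1 hL).1, by grind⟩) hPi

theorem domGain_pos {d₁ k : ℕ} (hd₁ : d₁ ∈ Dset K h Pi) (hk : d₁ < k) : 0 < domGain K h Pi k :=
  gain_pos_of_mem_Dset hgain (lastDom_mem hd₁ hk)

theorem gain_le_domGain (hh0 : ∀ k, h k 0 = 0) {d₁ k j : ℕ} (hd₁ : d₁ ∈ Dset K h Pi)
    (hk : d₁ < k) (hkK : k ≤ K) (hj : 1 ≤ j) (hjk : j < k) :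
    h j (Pi j) ≤ domGain K h Pi k := by
  have hLD := lastDom_mem hd₁ hk
  rcases le_or_gt (h j (Pi j)) 0 with hle | hpos
  · exact hle.trans (domGain_pos hgain hd₁ hk).le
  obtain ⟨L', hL', hL'j, hjL'⟩ :=
    Dset.exists_le_gain_le (K := K) hh0 (mem_Icc.2 ⟨hj, by omega⟩) hpos
  refine hjL'.trans ?_
  rcases (le_lastDom hL' (show L' < k by omega)).eq_or_lt with heq | hlt
  · rw [domGain, ← heq]
  · exact ((mem_Dset.1 hLD).2.2 L' (mem_Icc.1 (mem_Dset.1 hL').1).1 hlt).le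

theorem domGain_mono (hh0 : ∀ k, h k 0 = 0) {d₁ k k' : ℕ} (hd₁ : d₁ ∈ Dset K h Pi)
    (hk : d₁ < k) (hkk' : k ≤ k') (hk'K : k' ≤ K) : domGain K h Pi k ≤ domGain K h Pi k' :=
  gain_le_domGain hgain hh0 hd₁ (hk.trans_le hkk') hk'K
    (mem_Icc.1 (mem_Dset.1 (lastDom_mem hd₁ hk)).1).1 ((lastDom_lt (by omega)).trans_le hkk')

theorem gain_eq_zero_of_lt_first (hh0 : ∀ k, h k 0 = 0) {d₁ j : ℕ}
    (hd₁ : IsLeast (Dset K h Pi : Set ℕ) d₁) (hj : 1 ≤ j) (hjd : j < d₁) : h j (Pi j) = 0 := by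
  by_contra hne
  have hd₁K := (mem_Icc.1 (mem_Dset.1 hd₁.1).1).2
  have hPi : Pi j ≠ 0 := fun h0 => hne (by rw [h0, hh0])
  obtain ⟨L, hL, hLj, -⟩ :=
    Dset.exists_le_gain_le (K := K) hh0 (mem_Icc.2 ⟨hj, by omega⟩)
      (hgain j (mem_Icc.2 ⟨hj, by omega⟩) hPi)
  exact absurd (hd₁.2 hL) (by omega)

end Dominating

section Problem

variable {K N : ℕ} {h g : ℕ → ℕ → ℝ} {Pi : ℕ → ℕ} {Q ζ Γσ : ℝ} {d₁ : ℕ}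

theorem rateP_eq_of_eq_zero {p : ℕ → ℕ → ℝ} (hd₁K : d₁ ≤ K)
    (hp : ∀ k ∈ Icc 1 d₁, ∀ n ∈ NI N Pi k, p k n = 0) :
    RateP K N g Γσ Pi p = 1 / ((K : ℝ) * N) * ∑ k ∈ Icc (d₁ + 1) K, ∑ n ∈ NI N Pi k,
      Real.logb 2 (1 + g k n * p k n / Γσ) := by
  rw [RateP, show Icc 1 K = Ioc 0 K from Icc_add_one_left_eq_Ioc 0 K, Icc_add_one_left_eq_Ioc,
    ← sum_Ioc_consecutive _ (Nat.zero_le d₁) hd₁K, sum_eq_zero, zero_add]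
  intro k hk
  refine sum_eq_zero fun n hn => ?_
  rw [← Icc_add_one_left_eq_Ioc, zero_add] at hk
  simp [hp k hk n hn]

variable (hgain : ∀ k ∈ Icc 1 K, Pi k ≠ 0 → 0 < h k (Pi k))
include hgain

theorem sum_ite_domGain_mul_le (hd₁ : d₁ ∈ Dset K h Pi) {E : ℕ → ℝ}
    (hE : ∀ k ∈ Ioc d₁ K, 0 ≤ E k) {i : ℕ} (hiK : i ≤ K) :
    ∑ k ∈ Icc 1 i, (if d₁ < k then domGain K h Pi k * E k else 0)
      ≤ ∑ j ∈ Icc 1 (i - 1), h j (Pi j) * ∑ k ∈ Ioc d₁ K with lastDom K h Pi k = j, E k := by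
  have hRHS : ∑ j ∈ Icc 1 (i - 1), h j (Pi j) * ∑ k ∈ Ioc d₁ K with lastDom K h Pi k = j, E k
      = ∑ k ∈ Ioc d₁ K with lastDom K h Pi k ∈ Icc 1 (i - 1), domGain K h Pi k * E k := by
    rw [← sum_fiberwise_eq_sum_filter]
    refine sum_congr rfl fun j _ => ?_
    rw [mul_sum]
    exact sum_congr rfl fun k hk => by rw [domGain, (mem_filter.1 hk).2]
  rw [← sum_filter, hRHS]
  refine sum_le_sum_of_subset_of_nonneg (fun k hk => ?_) fun k hk _ => ?_
  · obtain ⟨hk, hd₁k⟩ := mem_filter.1 hk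
    have hL := mem_Icc.1 (mem_Dset.1 (lastDom_mem hd₁ hd₁k)).1
    have hki := mem_Icc.1 hk
    have := lastDom_lt (K := K) (h := h) (Pi := Pi) hki.1
    exact mem_filter.2 ⟨mem_Ioc.2 ⟨hd₁k, by grind⟩, mem_Icc.2 ⟨hL.1, by omega⟩⟩
  · have hk := (mem_filter.1 hk).1
    exact mul_nonneg (domGain_pos hgain hd₁ (mem_Ioc.1 hk).1).le (hE k hk)

theorem exists_feasibleP_rateP_eq (hζ : 0 < ζ) (hd₁ : d₁ ∈ Dset K h Pi)
    {g' p' : ℕ → ℕ → ℝ} (hg' : ∀ k ∈ Ioc d₁ K, ∀ n, g' k n = domGain K h Pi k * g k n)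
    (hp' : ∀ k ∈ Icc (d₁ + 1) K, ∀ n ∈ NI N Pi k, 0 ≤ p' k n)
    (hsum : ∑ k ∈ Icc (d₁ + 1) K, ∑ n ∈ NI N Pi k, p' k n = ζ * K * Q) :
    ∃ q p, FeasibleP K N h Q ζ 0 Pi q p ∧
      RateP K N g Γσ Pi p = 1 / ((K : ℝ) * N) * ∑ k ∈ Icc (d₁ + 1) K, ∑ n ∈ NI N Pi k,
        Real.logb 2 (1 + g' k n * p' k n / Γσ) := by
  have hd₁K := mem_Icc.1 (mem_Dset.1 hd₁).1
  rw [Icc_add_one_left_eq_Ioc] at hp' hsum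
  set E : ℕ → ℝ := fun k => ∑ n ∈ NI N Pi k, p' k n
  have hE : ∀ k ∈ Ioc d₁ K, 0 ≤ E k := fun k hk => sum_nonneg (hp' k hk)
  have hmaps : ∀ k ∈ Ioc d₁ K, lastDom K h Pi k ∈ Icc 1 K := fun k hk => by
    have := mem_Icc.1 (mem_Dset.1 (lastDom_mem hd₁ (mem_Ioc.1 hk).1)).1
    grind
  -- The energy spent in the slots `k` with `lastDom k = j` is harvested in slot `j`.
  refine ⟨fun j => ζ⁻¹ * ∑ k ∈ Ioc d₁ K with lastDom K h Pi k = j, E k,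
    fun k n => if d₁ < k then domGain K h Pi k * p' k n else 0, ⟨?_, ?_, ?_, ?_, ?_⟩, ?_⟩
  · exact fun j _ => mul_nonneg (inv_nonneg.2 hζ.le)
      (sum_nonneg fun k hk => hE k (mem_filter.1 hk).1)
  · intro j _ hj
    refine mul_eq_zero_of_right _ (sum_eq_zero fun k hk => ?_)
    obtain ⟨hkI, rfl⟩ := mem_filter.1 hk
    exact absurd hj (mem_Dset.1 (lastDom_mem hd₁ (mem_Ioc.1 hkI).1)).2.1
  · intro k _ n hn
    dsimp only
    split_ifs with hd₁k
    · exact mul_nonneg (domGain_pos hgain hd₁ hd₁k).le (hp' k (by grind) n hn)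
    · exact le_rfl
  · rw [← mul_sum, sum_fiberwise_of_maps_to hmaps, hsum]
    field_simp
    exact le_rfl
  · intro i hi
    have hle := sum_ite_domGain_mul_le hgain hd₁ hE (mem_Icc.1 hi).2
    simp only [sum_ite_irrel, sum_const_zero, ← mul_sum]
    refine hle.trans_eq ?_
    rw [add_zero, mul_sum]
    exact sum_congr rfl fun j _ => by field_simp
  · rw [rateP_eq_of_eq_zero (by omega : d₁ ≤ K) fun k hk n _ => if_neg (by grind)]
    refine congrArg _ (sum_congr rfl fun k hk => sum_congr rfl fun n _ => ?_)
    rw [if_pos (by grind), hg' k (by grind), mul_assoc, mul_left_comm (g k n)]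

variable (hh0 : ∀ k, h k 0 = 0)
include hh0

namespace FeasibleP

variable {q : ℕ → ℝ} {p : ℕ → ℕ → ℝ} (hfeas : FeasibleP K N h Q ζ 0 Pi q p)
  (hd₁ : IsLeast (Dset K h Pi : Set ℕ) d₁)
include hfeas hd₁

theorem eq_zero_of_le_first : ∀ k ∈ Icc 1 d₁, ∀ n ∈ NI N Pi k, p k n = 0 := by
  have hp := hfeas.2.2.1
  have hd₁K := (mem_Icc.1 (mem_Dset.1 hd₁.1).1)
  have hp' : ∀ k ∈ Icc 1 d₁, ∀ n ∈ NI N Pi k, 0 ≤ p k n := fun k hk =>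
    hp k (mem_Icc.2 ⟨(mem_Icc.1 hk).1, by grind⟩)
  have hle := hfeas.2.2.2.2 d₁ (mem_Icc.2 ⟨hd₁K.1, by omega⟩)
  have hharvest : ∑ j ∈ Icc 1 (d₁ - 1), h j (Pi j) * q j = 0 := sum_eq_zero fun j hj => by
    rw [gain_eq_zero_of_lt_first hgain hh0 hd₁ (mem_Icc.1 hj).1 (by grind), zero_mul]
  rw [hharvest, mul_zero, add_zero] at hle
  have hsum := le_antisymm hle (sum_nonneg fun k hk => sum_nonneg (hp' k hk))
  rw [sum_eq_zero_iff_of_nonneg fun k hk => sum_nonneg (hp' k hk)] at hsum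
  exact fun k hk => (sum_eq_zero_iff_of_nonneg (hp' k hk)).1 (hsum k hk)

theorem sum_inv_domGain_mul_le (hζ : 0 ≤ ζ) :
    ∑ k ∈ Ioc d₁ K, (domGain K h Pi k)⁻¹ * ∑ n ∈ NI N Pi k, p k n
      ≤ ζ * ∑ k ∈ Ico d₁ K, q k := by
  have hd₁K := mem_Icc.1 (mem_Dset.1 hd₁.1).1
  obtain ⟨hq, -, hp, -, hcausal⟩ := hfeas
  have hcausal' : ∀ i ∈ Ioc d₁ K, ∑ k ∈ Ioc d₁ i, ∑ n ∈ NI N Pi k, p k n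
      ≤ ∑ k ∈ Ico d₁ i, ζ * (h k (Pi k) * q k) := by
    intro i hi
    obtain ⟨hd₁i, hiK⟩ := mem_Ioc.1 hi
    calc ∑ k ∈ Ioc d₁ i, ∑ n ∈ NI N Pi k, p k n
        ≤ ∑ k ∈ Icc 1 i, ∑ n ∈ NI N Pi k, p k n :=
          sum_le_sum_of_subset_of_nonneg (fun k hk => by grind)
            fun k hk _ => sum_nonneg (hp k (by grind))
      _ ≤ ζ * ∑ k ∈ Icc 1 (i - 1), h k (Pi k) * q k + 0 := hcausal i (by grind)
      _ = ∑ k ∈ Ico d₁ i, ζ * (h k (Pi k) * q k) := by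
        rw [add_zero, mul_sum]
        refine (sum_subset (fun k hk => by grind) fun k hk hk' => ?_).symm
        rw [gain_eq_zero_of_lt_first hgain hh0 hd₁ (by grind) (by grind), zero_mul, mul_zero]
  calc ∑ k ∈ Ioc d₁ K, (domGain K h Pi k)⁻¹ * ∑ n ∈ NI N Pi k, p k n
      ≤ ∑ k ∈ Ico d₁ K, (domGain K h Pi (k + 1))⁻¹ * (ζ * (h k (Pi k) * q k)) :=
        sum_mul_le_sum_mul_of_partialSums_le
          (fun k hk k' hk' hkk' => inv_anti₀ (domGain_pos hgain hd₁.1 hk.1)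
            (domGain_mono hgain hh0 hd₁.1 hk.1 hkk' hk'.2))
          (inv_nonneg.2 (domGain_pos hgain hd₁.1 (by omega)).le) hcausal'
    _ ≤ ∑ k ∈ Ico d₁ K, ζ * q k := by
        refine sum_le_sum fun k hk => ?_
        obtain ⟨hd₁k, hkK⟩ := mem_Ico.1 hk
        have hle := gain_le_domGain hgain hh0 hd₁.1 (Nat.lt_succ_of_le hd₁k) hkK (by omega)
          (Nat.lt_succ_self k)
        have hqk := hq k (mem_Icc.2 ⟨by omega, hkK.le⟩)
        rw [inv_mul_le_iff₀ (domGain_pos hgain hd₁.1 (Nat.lt_succ_of_le hd₁k))]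
        nlinarith [mul_le_mul_of_nonneg_right hle (mul_nonneg hζ hqk)]
    _ = ζ * ∑ k ∈ Ico d₁ K, q k := (mul_sum _ _ _).symm

end FeasibleP

theorem exists_waterFilling_ge_rateP {q : ℕ → ℝ} {p : ℕ → ℕ → ℝ} {g' : ℕ → ℕ → ℝ}
    (hfeas : FeasibleP K N h Q ζ 0 Pi q p) (hd₁ : IsLeast (Dset K h Pi : Set ℕ) d₁)
    (hζ : 0 ≤ ζ) (hΓσ : 0 < Γσ) (hg : ∀ k ∈ Icc 1 K, ∀ n ∈ NI N Pi k, 0 ≤ g k n)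
    (hg' : ∀ k ∈ Ioc d₁ K, ∀ n, g' k n = domGain K h Pi k * g k n) (hK1 : 1 ∈ NI N Pi K) :
    ∃ p' : ℕ → ℕ → ℝ, (∀ k ∈ Icc (d₁ + 1) K, ∀ n ∈ NI N Pi k, 0 ≤ p' k n) ∧
      ∑ k ∈ Icc (d₁ + 1) K, ∑ n ∈ NI N Pi k, p' k n = ζ * K * Q ∧
      RateP K N g Γσ Pi p ≤ 1 / ((K : ℝ) * N) * ∑ k ∈ Icc (d₁ + 1) K, ∑ n ∈ NI N Pi k,
        Real.logb 2 (1 + g' k n * p' k n / Γσ) := by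
  have hd₁K := mem_Icc.1 (mem_Dset.1 hd₁.1).1
  have hH : ∀ k ∈ Icc (d₁ + 1) K, 0 < domGain K h Pi k := fun k hk =>
    domGain_pos hgain hd₁.1 (by grind)
  have hp : ∀ k ∈ Icc (d₁ + 1) K, ∀ n ∈ NI N Pi k, 0 ≤ p k n := fun k hk =>
    hfeas.2.2.1 k (by grind)
  have hbudget : ∑ k ∈ Icc (d₁ + 1) K, ∑ n ∈ NI N Pi k, (domGain K h Pi k)⁻¹ * p k n
      ≤ ζ * K * Q := by
    simp_rw [← mul_sum, Icc_add_one_left_eq_Ioc]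
    calc _ ≤ ζ * ∑ k ∈ Ico d₁ K, q k := hfeas.sum_inv_domGain_mul_le hgain hh0 hd₁ hζ
      _ ≤ ζ * ∑ k ∈ Icc 1 K, q k := mul_le_mul_of_nonneg_left
          (sum_le_sum_of_subset_of_nonneg (fun k hk => by grind)
            fun k hk _ => hfeas.1 k hk) hζ
      _ ≤ ζ * K * Q := by rw [mul_assoc]; exact mul_le_mul_of_nonneg_left hfeas.2.2.2.1 hζ
  obtain ⟨p', hle, hsum⟩ :=
    exists_le_and_sum_sum_eq (mem_Icc.2 ⟨by omega, le_rfl⟩) hK1 hbudget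
  refine ⟨p', fun k hk n hn => (mul_nonneg (inv_nonneg.2 (hH k hk).le) (hp k hk n hn)).trans
    (hle k n), hsum, ?_⟩
  rw [rateP_eq_of_eq_zero (by omega) (hfeas.eq_zero_of_le_first hgain hh0 hd₁)]
  refine mul_le_mul_of_nonneg_left (sum_le_sum fun k hk => sum_le_sum fun n hn => ?_)
    (by positivity)
  have hgk := hg k (by grind) n hn
  have hgp : g k n * p k n ≤ g' k n * p' k n :=
    calc g k n * p k n = domGain K h Pi k * g k n * ((domGain K h Pi k)⁻¹ * p k n) := by
          field_simp [(hH k hk).ne']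
      _ ≤ g' k n * p' k n := by
          rw [hg' k (by grind)]
          exact mul_le_mul_of_nonneg_left (hle k n) (mul_nonneg (hH k hk).le hgk)
  have := hp k hk n hn
  exact Real.logb_le_logb_of_le one_lt_two (by positivity)
    (add_le_add_right (div_le_div_of_nonneg_right hgp hΓσ.le) 1)

end Problem

theorem exists_lt_le_succ {d : ℕ → ℕ} {a b k : ℕ} (hab : a ≤ b) (hak : d a < k)
    (hkb : k ≤ d b) : ∃ i, a ≤ i ∧ i < b ∧ d i < k ∧ k ≤ d (i + 1) := by
  induction b, hab using Nat.le_induction with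
  | base => omega
  | succ b hab ih =>
    by_cases hbk : d b < k
    · exact ⟨b, hab, by omega, hbk, hkb⟩
    · obtain ⟨i, hai, hib, hi⟩ := ih (by omega)
      exact ⟨i, hai, by omega, hi⟩

theorem lastDom_eq_of_mem_Ioc {K M : ℕ} {h : ℕ → ℕ → ℝ} {Pi d : ℕ → ℕ}
    (hmono : StrictMonoOn d (Set.Iic (M + 1)))
    (hdmem : ∀ i, 1 ≤ i → i ≤ M → d i ∈ Dset K h Pi)
    (hdsurj : ∀ k ∈ Dset K h Pi, ∃ i, 1 ≤ i ∧ i ≤ M ∧ d i = k) {i k : ℕ} (hi : 1 ≤ i)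
    (hiM : i ≤ M) (hik : d i < k) (hki : k ≤ d (i + 1)) : lastDom K h Pi k = d i := by
  refine lastDom_eq (hdmem i hi hiM) hik fun j hj hjk => ?_
  obtain ⟨m, -, hmM, rfl⟩ := hdsurj j hj
  have hmi : m < i + 1 :=
    (hmono.lt_iff_lt (Set.mem_Iic.2 (by omega)) (Set.mem_Iic.2 (by omega))).1 (by omega)
  exact (hmono.le_iff_le (Set.mem_Iic.2 (by omega)) (Set.mem_Iic.2 (by omega))).2 (by omega)

theorem stmt10_general
    (K N : ℕ) (hN : 2 ≤ N)
    (h g : ℕ → ℕ → ℝ)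
    (hpos : ∀ k ∈ Finset.Icc 1 K, ∀ n ∈ Finset.Icc 1 N, 0 < h k n ∧ 0 < g k n)
    (hzero : ∀ k, h k 0 = 0 ∧ g k 0 = 0)
    (Q ζ B1 Γσ : ℝ) (hζ : 0 < ζ) (hΓσ : 0 < Γσ)
    (Pi : ℕ → ℕ) (hPiK : Pi K = 0) (hPiR : ∀ k ∈ Finset.Icc 1 K, Pi k ≤ N)
    (M : ℕ)
    (d : ℕ → ℕ) (hdK : d (M + 1) = K)
    (hdmono : ∀ i j, i < j → j ≤ M + 1 → d i < d j)
    (hdmem : ∀ i, 1 ≤ i → i ≤ M → d i ∈ Dset K h Pi)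
    (hdsurj : ∀ k ∈ Dset K h Pi, ∃ i, 1 ≤ i ∧ i ≤ M ∧ d i = k)
    (hB10 : B1 = 0) (hMpos : 1 ≤ M)
    (g' : ℕ → ℕ → ℝ)
    (hg' : ∀ i, 1 ≤ i → i ≤ M → ∀ k, d i < k → k ≤ d (i + 1) → ∀ n,
      g' k n = h (d i) (Pi (d i)) * g k n) :
    sSup {r : ℝ | ∃ (q : ℕ → ℝ) (p : ℕ → ℕ → ℝ),
        FeasibleP K N h Q ζ B1 Pi q p ∧ r = RateP K N g Γσ Pi p}
    = sSup {r : ℝ | ∃ p' : ℕ → ℕ → ℝ,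
        (∀ k ∈ Finset.Icc (d 1 + 1) K, ∀ n ∈ NI N Pi k, 0 ≤ p' k n) ∧
        (∑ k ∈ Finset.Icc (d 1 + 1) K, ∑ n ∈ NI N Pi k, p' k n = ζ * (K : ℝ) * Q) ∧
        r = (1 / ((K : ℝ) * N)) * ∑ k ∈ Finset.Icc (d 1 + 1) K, ∑ n ∈ NI N Pi k,
              Real.logb 2 (1 + g' k n * p' k n / Γσ)} := by
  subst hB10
  have hh0 : ∀ k, h k 0 = 0 := fun k => (hzero k).1
  have hgain : ∀ k ∈ Icc 1 K, Pi k ≠ 0 → 0 < h k (Pi k) := fun k hk hPi =>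
    (hpos k hk (Pi k) (mem_Icc.2 ⟨Nat.one_le_iff_ne_zero.2 hPi, hPiR k hk⟩)).1
  have hg : ∀ k ∈ Icc 1 K, ∀ n ∈ NI N Pi k, 0 ≤ g k n := fun k hk n hn => by
    rcases n.eq_zero_or_pos with rfl | hn0
    · exact (hzero k).2.ge
    · exact (hpos k hk n (mem_Icc.2 ⟨hn0, (mem_Icc.1 (mem_sdiff.1 hn).1).2⟩)).2.le
  have hmono : StrictMonoOn d (Set.Iic (M + 1)) := fun i _ j hj hij => hdmono i j hij hj
  have hd₁ : IsLeast (Dset K h Pi : Set ℕ) (d 1) := ⟨hdmem 1 le_rfl hMpos, fun k hk => by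
    obtain ⟨i, hi, hiM, rfl⟩ := hdsurj k hk
    exact (hmono.le_iff_le (Set.mem_Iic.2 (by omega)) (Set.mem_Iic.2 (by omega))).2 hi⟩
  have hgDom : ∀ k ∈ Ioc (d 1) K, ∀ n, g' k n = domGain K h Pi k * g k n := fun k hk n => by
    obtain ⟨i, hi, hiM, hik, hki⟩ :=
      exists_lt_le_succ (by omega : 1 ≤ M + 1) (mem_Ioc.1 hk).1 (hdK ▸ (mem_Ioc.1 hk).2)
    rw [hg' i hi (by omega) k hik hki n, domGain,
      lastDom_eq_of_mem_Ioc hmono hdmem hdsurj hi (by omega) hik hki]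
  have hK1 : 1 ∈ NI N Pi K := by simp [NI, hPiK]; omega
  refine csSup_eq_csSup_of_forall_exists_le ?_ ?_
  · rintro _ ⟨q, p, hfeas, rfl⟩
    obtain ⟨p', hp', hsum, hle⟩ :=
      exists_waterFilling_ge_rateP hgain hh0 hfeas hd₁ hζ.le hΓσ hg hgDom hK1
    exact ⟨_, ⟨p', hp', hsum, rfl⟩, hle⟩
  · rintro _ ⟨p', hp', hsum, rfl⟩
    obtain ⟨q, p, hfeas, hrate⟩ := exists_feasibleP_rateP_eq hgain hζ hd₁.1 hgDom hp' hsum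
    exact ⟨_, ⟨q, p, hfeas, rfl⟩, hrate.ge⟩

theorem stmt10
    (K N : ℕ) (hK : 2 ≤ K) (hN : 2 ≤ N)
    (h g : ℕ → ℕ → ℝ)
    (hpos : ∀ k ∈ Finset.Icc 1 K, ∀ n ∈ Finset.Icc 1 N, 0 < h k n ∧ 0 < g k n)
    (hzero : ∀ k, h k 0 = 0 ∧ g k 0 = 0)
    (Q ζ B1 Γσ : ℝ) (hQ : 0 < Q) (hζ : 0 < ζ) (hB1 : 0 ≤ B1) (hΓσ : 0 < Γσ)
    (Pi : ℕ → ℕ) (hPiK : Pi K = 0) (hPiR : ∀ k ∈ Finset.Icc 1 K, Pi k ≤ N)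
    (M : ℕ) (hM : M = (Dset K h Pi).card)
    (d : ℕ → ℕ) (hd0 : d 0 = 0) (hdK : d (M + 1) = K)
    (hdmono : ∀ i j, i < j → j ≤ M + 1 → d i < d j)
    (hdmem : ∀ i, 1 ≤ i → i ≤ M → d i ∈ Dset K h Pi)
    (hdsurj : ∀ k ∈ Dset K h Pi, ∃ i, 1 ≤ i ∧ i ≤ M ∧ d i = k)
    (hdist : ∀ k ∈ Finset.Icc 1 K, ∀ k' ∈ Finset.Icc 1 K,
      Pi k ≠ 0 → Pi k' ≠ 0 → k ≠ k' → h k (Pi k) ≠ h k' (Pi k'))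
    (hB10 : B1 = 0) (hMpos : 1 ≤ M)
    (g' : ℕ → ℕ → ℝ)
    (hg' : ∀ i, 1 ≤ i → i ≤ M → ∀ k, d i < k → k ≤ d (i + 1) → ∀ n,
      g' k n = h (d i) (Pi (d i)) * g k n) :
    sSup {r : ℝ | ∃ (q : ℕ → ℝ) (p : ℕ → ℕ → ℝ),
        FeasibleP K N h Q ζ B1 Pi q p ∧ r = RateP K N g Γσ Pi p}
    = sSup {r : ℝ | ∃ p' : ℕ → ℕ → ℝ,
        (∀ k ∈ Finset.Icc (d 1 + 1) K, ∀ n ∈ NI N Pi k, 0 ≤ p' k n) ∧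
        (∑ k ∈ Finset.Icc (d 1 + 1) K, ∑ n ∈ NI N Pi k, p' k n = ζ * (K : ℝ) * Q) ∧
        r = (1 / ((K : ℝ) * N)) * ∑ k ∈ Finset.Icc (d 1 + 1) K, ∑ n ∈ NI N Pi k,
              Real.logb 2 (1 + g' k n * p' k n / Γσ)} :=
  stmt10_general K N hN h g hpos hzero Q ζ B1 Γσ hζ hΓσ Pi hPiK hPiR M d hdK hdmono hdmem hdsurj
    hB10 hMpos g' hg'
end
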